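/- Let N, d ≥ 1, let ν_I : (ZMod N)^I → ℝ for I ⊊ {1,…,d} be nonnegative weights, let ν_{[d]} : (ZMod N)^d → ℝ be nonnegative, and let Ω ⊆ (ZMod N)^d have face structure. Assume that ⟨f, Df⟩_ν > 0 for every f ∈ F_T that is not identically zero. Then ‖·‖_BAC is a norm on F_T: it is nonnegative, strictly positive on nonzero elements of F_T, satisfies ‖λf‖_BAC = |λ|·‖f‖_BAC for all λ ∈ ℝ, and satisfies the triangle inequality. Moreover ‖f‖_BAC = ‖f·1_Ω‖_BAC for every f : (ZMod N)^d → ℝ. -/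

import Mathlib

noncomputable section
open Finset

/-- `P_ω(x,y)`: the point whose `i`-th coordinate is `x i` if `ω i = false` and `y i` otherwise. -/
def proj {ι : Type*} {N : ℕ} (ω : ι → Bool) (x y : ι → ZMod N) : ι → ZMod N :=
  fun i => if ω i then y i else x i

/-- `P_{ω_I}(x_I, y_I)` as a function on the subtype `↥I`. -/
def projI {ι : Type*} {N : ℕ} {I : Finset ι} (ω : I → Bool) (x y : ι → ZMod N) :
    I → ZMod N :=
  fun i => if ω i then y i.1 else x i.1

/-- The weighted inner product `⟨f,g⟩_ν`. -/
def wInner {ι : Type*} [Fintype ι] [DecidableEq ι] {N : ℕ} [NeZero N]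
    (ν : (I : Finset ι) → (I → ZMod N) → ℝ) (f g : (ι → ZMod N) → ℝ) : ℝ :=
  Finset.expect Finset.univ fun x : ι → ZMod N =>
    f x * g x * ∏ I ∈ univ.filter (fun I : Finset ι => I ≠ univ), ν I (fun i => x i.1)

/-- The dual function `Df`. -/
def dualFn {ι : Type*} [Fintype ι] [DecidableEq ι] {N : ℕ} [NeZero N]
    (ν : (I : Finset ι) → (I → ZMod N) → ℝ) (f : (ι → ZMod N) → ℝ)
    (x : ι → ZMod N) : ℝ :=
  Finset.expect Finset.univ fun y : ι → ZMod N =>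
    (∏ ω ∈ univ.filter (fun ω : ι → Bool => ω ≠ fun _ => false), f (proj ω x y)) *
      ∏ I ∈ univ.filter (fun I : Finset ι => I ≠ univ),
        ∏ ω ∈ univ.filter (fun ω : I → Bool => ω ≠ fun _ => false), ν I (projI ω x y)

/-- A set `Ω` has face structure if it is the intersection of sets `Ω_J` over `∅ ≠ J ⊊ ι`,
where membership in `Ω_J` depends only on the coordinates outside of `J`. -/
def HasFaceStructure {ι : Type*} [Fintype ι] [DecidableEq ι] {N : ℕ}
    (Ω : Set (ι → ZMod N)) : Prop :=
  ∃ ΩJ : Finset ι → Set (ι → ZMod N),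
    (∀ J : Finset ι, J ≠ ∅ → J ≠ univ →
      ∀ x y : ι → ZMod N, (∀ i, i ∉ J → x i = y i) → (x ∈ ΩJ J → y ∈ ΩJ J)) ∧
    Ω = ⋂ J ∈ {J : Finset ι | J ≠ ∅ ∧ J ≠ univ}, ΩJ J

/-- `F_T`: functions supported on `Ω`. -/
def FT {ι : Type*} {N : ℕ} (Ω : Set (ι → ZMod N)) : Set ((ι → ZMod N) → ℝ) :=
  {f | ∀ x, x ∉ Ω → f x = 0}

/-- `S_T`: functions supported on `Ω` and dominated by `ν_{[d]} + 2`. -/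
def STset {ι : Type*} {N : ℕ} (Ω : Set (ι → ZMod N)) (νd : (ι → ZMod N) → ℝ) :
    Set ((ι → ZMod N) → ℝ) :=
  {f | f ∈ FT Ω ∧ ∀ x, |f x| ≤ νd x + 2}

/-- The basic anti-correlation norm `‖f‖_BAC = max_{g ∈ S_T} |⟨f, Dg⟩_ν|`. -/
def BACnorm {ι : Type*} [Fintype ι] [DecidableEq ι] {N : ℕ} [NeZero N]
    (ν : (I : Finset ι) → (I → ZMod N) → ℝ) (Ω : Set (ι → ZMod N))
    (νd : (ι → ZMod N) → ℝ) (f : (ι → ZMod N) → ℝ) : ℝ :=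
  sSup ((fun g => |wInner ν f (dualFn ν g)|) '' STset Ω νd)

/-!
Since `⟨·,·⟩_ν` is linear in its first argument, `‖·‖_BAC` is a supremum of absolute values of
linear functionals, hence absolutely homogeneous and subadditive. Positivity comes from testing
`f` against a small multiple `εf ∈ S_T`: the dual function is homogeneous of degree `2^d - 1`,
so `⟨f, D(εf)⟩_ν = ε^(2^d-1) ⟨f, Df⟩_ν > 0`.

For `‖f‖_BAC = ‖f·1_Ω‖_BAC` it suffices that `Dg` vanishes off `Ω` for `g ∈ F_T`. If `x ∉ Ω`,
then `x ∉ Ω_J` for some face `J`; taking `ω = 1_J`, the point `P_ω(x,y)` agrees with `x` off `J`,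
so it lies outside `Ω_J ⊇ Ω` and the factor `g(P_ω(x,y))` of `Dg(x)` vanishes for every `y`.
-/

section WeightedInner

variable {ι : Type*} [Fintype ι] [DecidableEq ι] {N : ℕ} [NeZero N]
  (ν : (I : Finset ι) → (I → ZMod N) → ℝ)

lemma wInner_add_left (f g h : (ι → ZMod N) → ℝ) :
    wInner ν (f + g) h = wInner ν f h + wInner ν g h := by
  unfold wInner
  rw [← expect_add_distrib]
  exact expect_congr rfl fun x _ => by simp only [Pi.add_apply]; ring

lemma wInner_smul_left (c : ℝ) (f h : (ι → ZMod N) → ℝ) :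
    wInner ν (fun x => c * f x) h = c * wInner ν f h := by
  unfold wInner
  rw [mul_expect]
  exact expect_congr rfl fun x _ => by ring

lemma wInner_smul_right (c : ℝ) (f h : (ι → ZMod N) → ℝ) :
    wInner ν f (fun x => c * h x) = c * wInner ν f h := by
  unfold wInner
  rw [mul_expect]
  exact expect_congr rfl fun x _ => by ring

lemma wInner_congr_left_of_eqOn {Ω : Set (ι → ZMod N)} {f₁ f₂ h : (ι → ZMod N) → ℝ}
    (hf : Set.EqOn f₁ f₂ Ω) (hh : ∀ x ∉ Ω, h x = 0) : wInner ν f₁ h = wInner ν f₂ h := by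
  refine expect_congr rfl fun x _ => ?_
  by_cases hx : x ∈ Ω
  · rw [hf hx]
  · simp only [hh x hx, mul_zero, zero_mul]

variable {ν}

lemma abs_wInner_le (hν : ∀ I : Finset ι, I ≠ univ → ∀ z, 0 ≤ ν I z)
    {h H : (ι → ZMod N) → ℝ} (hH : ∀ x, |h x| ≤ H x) (f : (ι → ZMod N) → ℝ) :
    |wInner ν f h| ≤ wInner ν (fun x => |f x|) H := by
  refine (abs_expect_le _ _).trans (expect_le_expect fun x _ => ?_)
  have hweight : 0 ≤ ∏ I ∈ univ.filter (fun I : Finset ι => I ≠ univ), ν I (fun i => x i.1) :=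
    prod_nonneg fun I hI => hν I (mem_filter.1 hI).2 _
  rw [abs_mul, abs_mul, abs_of_nonneg hweight]
  gcongr
  exact hH x

end WeightedInner

section DualFunction

variable {ι : Type*} [Fintype ι] [DecidableEq ι] {N : ℕ} [NeZero N]
  {ν : (I : Finset ι) → (I → ZMod N) → ℝ}

lemma dualFn_smul (c : ℝ) (g : (ι → ZMod N) → ℝ) :
    dualFn ν (fun z => c * g z) = fun x =>
      c ^ #(univ.filter fun ω : ι → Bool => ω ≠ fun _ => false) * dualFn ν g x := by
  ext x
  unfold dualFn
  rw [mul_expect]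
  refine expect_congr rfl fun y _ => ?_
  rw [prod_mul_distrib, prod_const]
  ring

lemma abs_dualFn_le (hν : ∀ I : Finset ι, I ≠ univ → ∀ z, 0 ≤ ν I z)
    {g G : (ι → ZMod N) → ℝ} (hG : ∀ x, |g x| ≤ G x) (x : ι → ZMod N) :
    |dualFn ν g x| ≤ dualFn ν G x := by
  refine (abs_expect_le _ _).trans (expect_le_expect fun y _ => ?_)
  have hweight : 0 ≤ ∏ I ∈ univ.filter (fun I : Finset ι => I ≠ univ),
      ∏ ω ∈ univ.filter (fun ω : I → Bool => ω ≠ fun _ => false), ν I (projI ω x y) :=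
    prod_nonneg fun I hI => prod_nonneg fun ω _ => hν I (mem_filter.1 hI).2 _
  rw [abs_mul, abs_prod, abs_of_nonneg hweight]
  exact mul_le_mul_of_nonneg_right (prod_le_prod (fun ω _ => abs_nonneg _) fun ω _ => hG _)
    hweight

lemma dualFn_eq_zero_of_notMem {Ω : Set (ι → ZMod N)} (hΩ : HasFaceStructure Ω)
    {g : (ι → ZMod N) → ℝ} (hg : g ∈ FT Ω) {x : ι → ZMod N} (hx : x ∉ Ω) :
    dualFn ν g x = 0 := by
  obtain ⟨ΩJ, hdep, rfl⟩ := hΩ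
  obtain ⟨J, ⟨hJ₀, hJ⟩, hxJ⟩ : ∃ J ∈ {J : Finset ι | J ≠ ∅ ∧ J ≠ univ}, x ∉ ΩJ J := by
    simpa only [Set.mem_iInter₂, not_forall, exists_prop] using hx
  obtain ⟨j, hj⟩ := nonempty_iff_ne_empty.2 hJ₀
  set ω : ι → Bool := fun i => decide (i ∈ J)
  have hω : ω ∈ univ.filter (fun ω : ι → Bool => ω ≠ fun _ => false) :=
    mem_filter.2 ⟨mem_univ _, fun h => by simpa [ω, hj] using congrFun h j⟩
  refine expect_eq_zero fun y _ => ?_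
  have hproj : proj ω x y ∉ ⋂ J ∈ {J : Finset ι | J ≠ ∅ ∧ J ≠ univ}, ΩJ J := fun hmem =>
    hxJ <| hdep J hJ₀ hJ _ x (fun i hi => by simp [proj, ω, hi])
      (Set.mem_iInter₂.1 hmem J ⟨hJ₀, hJ⟩)
  rw [prod_eq_zero hω (hg _ hproj), zero_mul]

end DualFunction

lemma exists_pos_smul_mem_STset {ι : Type*} [Fintype ι] {N : ℕ} [NeZero N]
    {Ω : Set (ι → ZMod N)} {νd : (ι → ZMod N) → ℝ} (hνd : ∀ x, 0 ≤ νd x)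
    {f : (ι → ZMod N) → ℝ} (hf : f ∈ FT Ω) :
    ∃ ε > 0, (fun x => ε * f x) ∈ STset Ω νd := by
  obtain ⟨M, hM⟩ := (Set.finite_range fun x => |f x|).bddAbove
  have hM₀ : 0 ≤ M := (abs_nonneg _).trans (hM ⟨0, rfl⟩)
  refine ⟨(M + 1)⁻¹, by positivity, fun x hx => by simp [hf x hx], fun x => ?_⟩
  have hfx : |f x| ≤ M + 1 := (hM ⟨x, rfl⟩).trans (le_add_of_nonneg_right zero_le_one)
  calc |(M + 1)⁻¹ * f x| = (M + 1)⁻¹ * |f x| := by rw [abs_mul, abs_of_pos (by positivity)]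
    _ ≤ (M + 1)⁻¹ * (M + 1) := by gcongr
    _ = 1 := inv_mul_cancel₀ (by positivity)
    _ ≤ νd x + 2 := by linarith [hνd x]

section BACnorm

variable {ι : Type*} [Fintype ι] [DecidableEq ι] {N : ℕ} [NeZero N]
  {ν : (I : Finset ι) → (I → ZMod N) → ℝ} {Ω : Set (ι → ZMod N)} {νd : (ι → ZMod N) → ℝ}

lemma bddAbove_BACnorm_set (hν : ∀ I : Finset ι, I ≠ univ → ∀ z, 0 ≤ ν I z)
    (f : (ι → ZMod N) → ℝ) :
    BddAbove ((fun g => |wInner ν f (dualFn ν g)|) '' STset Ω νd) := by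
  refine ⟨wInner ν (fun x => |f x|) (dualFn ν fun x => νd x + 2), ?_⟩
  rintro r ⟨g, hg, rfl⟩
  exact abs_wInner_le hν (abs_dualFn_le hν hg.2) f

lemma abs_wInner_dualFn_le_BACnorm (hν : ∀ I : Finset ι, I ≠ univ → ∀ z, 0 ≤ ν I z)
    (f : (ι → ZMod N) → ℝ) {g : (ι → ZMod N) → ℝ} (hg : g ∈ STset Ω νd) :
    |wInner ν f (dualFn ν g)| ≤ BACnorm ν Ω νd f :=
  le_csSup (bddAbove_BACnorm_set hν f) ⟨g, hg, rfl⟩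

lemma BACnorm_nonneg (f : (ι → ZMod N) → ℝ) : 0 ≤ BACnorm ν Ω νd f :=
  Real.sSup_nonneg <| by rintro _ ⟨g, -, rfl⟩; exact abs_nonneg _

open scoped Pointwise in
lemma BACnorm_smul (c : ℝ) (f : (ι → ZMod N) → ℝ) :
    BACnorm ν Ω νd (fun x => c * f x) = |c| * BACnorm ν Ω νd f := by
  have hset : (fun g => |wInner ν (fun x => c * f x) (dualFn ν g)|) '' STset Ω νd
      = |c| • ((fun g => |wInner ν f (dualFn ν g)|) '' STset Ω νd) := by
    rw [← Set.image_smul, ← Set.image_comp]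
    refine Set.image_congr fun g _ => ?_
    rw [Function.comp_apply, smul_eq_mul, wInner_smul_left, abs_mul]
  rw [BACnorm, hset, Real.sSup_smul_of_nonneg (abs_nonneg c), smul_eq_mul, BACnorm]

lemma BACnorm_add_le (hν : ∀ I : Finset ι, I ≠ univ → ∀ z, 0 ≤ ν I z)
    (f g : (ι → ZMod N) → ℝ) :
    BACnorm ν Ω νd (f + g) ≤ BACnorm ν Ω νd f + BACnorm ν Ω νd g := by
  refine Real.sSup_le ?_ (add_nonneg (BACnorm_nonneg f) (BACnorm_nonneg g))
  rintro _ ⟨h, hh, rfl⟩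
  calc |wInner ν (f + g) (dualFn ν h)|
      = |wInner ν f (dualFn ν h) + wInner ν g (dualFn ν h)| := by rw [wInner_add_left]
    _ ≤ |wInner ν f (dualFn ν h)| + |wInner ν g (dualFn ν h)| := abs_add_le _ _
    _ ≤ BACnorm ν Ω νd f + BACnorm ν Ω νd g :=
      add_le_add (abs_wInner_dualFn_le_BACnorm hν f hh) (abs_wInner_dualFn_le_BACnorm hν g hh)

lemma BACnorm_pos (hν : ∀ I : Finset ι, I ≠ univ → ∀ z, 0 ≤ ν I z) (hνd : ∀ x, 0 ≤ νd x)
    {f : (ι → ZMod N) → ℝ} (hf : f ∈ FT Ω) (hfD : 0 < wInner ν f (dualFn ν f)) :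
    0 < BACnorm ν Ω νd f := by
  obtain ⟨ε, hε, hεf⟩ := exists_pos_smul_mem_STset hνd hf
  have hεD : 0 < |wInner ν f (dualFn ν fun x => ε * f x)| := by
    rw [dualFn_smul, wInner_smul_right]
    positivity
  exact hεD.trans_le (abs_wInner_dualFn_le_BACnorm hν f hεf)

lemma BACnorm_indicator (hΩ : HasFaceStructure Ω) (f : (ι → ZMod N) → ℝ) :
    BACnorm ν Ω νd (Ω.indicator f) = BACnorm ν Ω νd f := by
  unfold BACnorm
  refine congrArg sSup (Set.image_congr fun g hg => congrArg abs ?_)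
  exact wInner_congr_left_of_eqOn ν Set.eqOn_indicator fun x hx =>
    dualFn_eq_zero_of_notMem hΩ hg.1 hx

end BACnorm

theorem BACnorm_is_norm_general (N d : ℕ) [NeZero N]
    (ν : (I : Finset (Fin d)) → (I → ZMod N) → ℝ)
    (hν : ∀ I : Finset (Fin d), I ≠ univ → ∀ z, 0 ≤ ν I z)
    (νd : (Fin d → ZMod N) → ℝ) (hνd : ∀ x, 0 ≤ νd x)
    (Ω : Set (Fin d → ZMod N)) (hΩ : HasFaceStructure Ω)
    (hpos : ∀ f ∈ FT Ω, f ≠ 0 → 0 < wInner ν f (dualFn ν f)) :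
    (∀ f : (Fin d → ZMod N) → ℝ, 0 ≤ BACnorm ν Ω νd f) ∧
    (∀ f ∈ FT Ω, f ≠ 0 → 0 < BACnorm ν Ω νd f) ∧
    (∀ (lam : ℝ), ∀ f ∈ FT Ω,
      BACnorm ν Ω νd (fun x => lam * f x) = |lam| * BACnorm ν Ω νd f) ∧
    (∀ f ∈ FT Ω, ∀ g ∈ FT Ω,
      BACnorm ν Ω νd (f + g) ≤ BACnorm ν Ω νd f + BACnorm ν Ω νd g) ∧
    (∀ f : (Fin d → ZMod N) → ℝ, BACnorm ν Ω νd f = BACnorm ν Ω νd (Ω.indicator f)) :=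
  ⟨BACnorm_nonneg,
    fun f hf hf₀ => BACnorm_pos hν hνd hf (hpos f hf hf₀),
    fun c f _ => BACnorm_smul c f,
    fun f _ g _ => BACnorm_add_le hν f g,
    fun f => (BACnorm_indicator hΩ f).symm⟩

/-- The BAC norm is a norm on `F_T`, and `‖f‖_BAC = ‖f·1_Ω‖_BAC`. -/
theorem BACnorm_is_norm (N d : ℕ) [NeZero N] (hd : 1 ≤ d)
    (ν : (I : Finset (Fin d)) → (I → ZMod N) → ℝ)
    (hν : ∀ I : Finset (Fin d), I ≠ univ → ∀ z, 0 ≤ ν I z)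
    (νd : (Fin d → ZMod N) → ℝ) (hνd : ∀ x, 0 ≤ νd x)
    (Ω : Set (Fin d → ZMod N)) (hΩ : HasFaceStructure Ω)
    (hpos : ∀ f ∈ FT Ω, f ≠ 0 → 0 < wInner ν f (dualFn ν f)) :
    (∀ f : (Fin d → ZMod N) → ℝ, 0 ≤ BACnorm ν Ω νd f) ∧
    (∀ f ∈ FT Ω, f ≠ 0 → 0 < BACnorm ν Ω νd f) ∧
    (∀ (lam : ℝ), ∀ f ∈ FT Ω,
      BACnorm ν Ω νd (fun x => lam * f x) = |lam| * BACnorm ν Ω νd f) ∧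
    (∀ f ∈ FT Ω, ∀ g ∈ FT Ω,
      BACnorm ν Ω νd (f + g) ≤ BACnorm ν Ω νd f + BACnorm ν Ω νd g) ∧
    (∀ f : (Fin d → ZMod N) → ℝ, BACnorm ν Ω νd f = BACnorm ν Ω νd (Ω.indicator f)) :=
  BACnorm_is_norm_general N d ν hν νd hνd Ω hΩ hpos

end
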